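/- arXiv:2207.08280 — 5 statements merged into one kernel-verified Lean document; each statement's English description precedes it below -/
import Mathlib

section
/- A Boolean function f : F_2^n → F_2 is correlation immune of order t (i.e., the output of f is statistically independent of any subset of at most t input variables under the uniform distribution on inputs) if and only if its Walsh transform W_f(a) = Σ_{x ∈ F_2^n} (-1)^{f(x) ⊕ a·x} vanishes for all a ∈ F_2^n with 1 ≤ w_H(a) ≤ t. -/
open Finset

lemma sign_add' : ∀ u v : ZMod 2, (-1:ℤ)^((u+v).val) = (-1)^u.val * (-1)^v.val := by decide

lemma flip_sign' : ∀ w : ZMod 2, (-1:ℤ)^((w + 1).val) = -(-1)^w.val := by decide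

lemma card_agree' {n : ℕ} (S : Finset (Fin n)) (y : Fin n → ZMod 2) :
    (univ.filter fun x : Fin n → ZMod 2 => ∀ i ∈ S, x i = y i).card = 2 ^ (n - S.card) := by
  classical
  have e : {x : Fin n → ZMod 2 // ∀ i ∈ S, x i = y i} ≃ ({i : Fin n // i ∉ S} → ZMod 2) :=
    { toFun := fun x i => x.1 i.1
      invFun := fun g => ⟨fun i => if h : i ∈ S then y i else g ⟨i, h⟩, fun i hi => by simp [hi]⟩
      left_inv := fun x => by
        ext i; by_cases h : i ∈ S
        · simp [h, x.2 i h]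
        · simp [h]
      right_inv := fun g => by ext i; simp [i.2] }
  have h1 := Fintype.card_congr e
  rw [Fintype.card_subtype] at h1
  rw [h1, Fintype.card_fun]
  have h2 : Fintype.card {i : Fin n // i ∉ S} = n - S.card := by
    rw [Fintype.card_subtype_compl]
    simp
  rw [h2]
  norm_num

lemma cube_sum' {n : ℕ} {a : Fin n → ZMod 2} (ha : a ≠ 0) :
    ∑ x : Fin n → ZMod 2, (-1:ℤ)^((∑ i, a i * x i).val) = 0 := by
  classical
  obtain ⟨i0, hi0⟩ : ∃ i0, a i0 ≠ 0 := by
    by_contra h; push_neg at h; exact ha (funext fun i => h i)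
  have hai0 : a i0 = 1 := by
    have h : ∀ u : ZMod 2, u ≠ 0 → u = 1 := by decide
    exact h _ hi0
  set c : Fin n → ZMod 2 := Pi.single i0 1 with hc
  have hdot : ∀ x : Fin n → ZMod 2, (∑ i, a i * (x i + c i)) = (∑ i, a i * x i) + 1 := by
    intro x
    have h : ∀ i, a i * (x i + c i) = a i * x i + a i * c i := fun i => by ring
    simp_rw [h, Finset.sum_add_distrib]
    congr 1
    rw [Finset.sum_eq_single i0]
    · simp [hc, hai0]
    · intro b _ hb; simp [hc, Pi.single_eq_of_ne hb]
    · simp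
  have key : (∑ x : Fin n → ZMod 2, (-1:ℤ)^((∑ i, a i * x i).val))
      = ∑ x : Fin n → ZMod 2, (-1:ℤ)^((∑ i, a i * (x i + c i)).val) := by
    apply Fintype.sum_bijective (fun x => x + c) (Equiv.addRight c).bijective
    intro x
    have h : ∀ i, (x + c) i + c i = x i := by
      intro i; show x i + c i + c i = x i
      rw [add_assoc]; simp [CharTwo.add_self_eq_zero]
    simp_rw [h]
  simp_rw [hdot, flip_sign'] at key
  rw [Finset.sum_neg_distrib] at key
  linarith

lemma subcube_eval' {n : ℕ} (S : Finset (Fin n)) (z : Fin n → ZMod 2) :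
    ∑ a ∈ univ.filter (fun a : Fin n → ZMod 2 => ∀ i ∈ Sᶜ, a i = 0),
      (-1:ℤ)^((∑ i, a i * z i).val)
      = if ∀ i ∈ S, z i = 0 then (2:ℤ)^S.card else 0 := by
  classical
  by_cases hz : ∀ i ∈ S, z i = 0
  · rw [if_pos hz]
    have hterm : ∀ a ∈ univ.filter (fun a : Fin n → ZMod 2 => ∀ i ∈ Sᶜ, a i = 0),
        (-1:ℤ)^((∑ i, a i * z i).val) = 1 := by
      intro a ha
      rw [mem_filter] at ha
      have h0 : (∑ i, a i * z i) = 0 := by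
        apply Finset.sum_eq_zero
        intro i _
        by_cases hi : i ∈ S
        · rw [hz i hi, mul_zero]
        · rw [ha.2 i (mem_compl.mpr hi), zero_mul]
      rw [h0]; rfl
    rw [Finset.sum_congr rfl hterm, Finset.sum_const, nsmul_eq_mul, mul_one]
    have hcard : (univ.filter (fun a : Fin n → ZMod 2 => ∀ i ∈ Sᶜ, a i = 0)).card
        = 2 ^ S.card := by
      have h := card_agree' Sᶜ (0 : Fin n → ZMod 2)
      simp only [Pi.zero_apply] at h
      rw [h, card_compl, Fintype.card_fin]
      have hle : S.card ≤ n := by simpa using S.card_le_univ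
      have h3 : n - (n - S.card) = S.card := Nat.sub_sub_self hle
      rw [h3]
    rw [hcard]
    push_cast
    ring
  · rw [if_neg hz]
    push_neg at hz
    obtain ⟨i0, hi0S, hi0⟩ := hz
    have hz1 : z i0 = 1 := by
      have h : ∀ u : ZMod 2, u ≠ 0 → u = 1 := by decide
      exact h _ hi0
    set c : Fin n → ZMod 2 := Pi.single i0 1 with hc
    have hdot : ∀ a : Fin n → ZMod 2,
        (∑ i, (a i + c i) * z i) = (∑ i, a i * z i) + 1 := by
      intro a
      have h : ∀ i, (a i + c i) * z i = a i * z i + c i * z i := fun i => by ring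
      simp_rw [h, Finset.sum_add_distrib]
      congr 1
      rw [Finset.sum_eq_single i0]
      · simp [hc, hz1]
      · intro b _ hb; simp [hc, Pi.single_eq_of_ne hb]
      · simp
    apply Finset.sum_involution (fun a _ => a + c)
    · intro a _
      show (-1:ℤ)^((∑ i, a i * z i).val) + (-1)^((∑ i, (a + c) i * z i).val) = 0
      have h : (∑ i, (a + c) i * z i) = (∑ i, a i * z i) + 1 := hdot a
      rw [h, flip_sign']
      ring
    · intro a _ _
      intro h
      have h0 : c = 0 := add_eq_left.mp h
      have h1 : c i0 = 0 := by rw [h0]; rfl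
      simp [hc] at h1
    · intro a ha
      rw [mem_filter] at ha ⊢
      refine ⟨mem_univ _, fun i hi => ?_⟩
      have hiS : i ∉ S := mem_compl.mp hi
      have hne : i ≠ i0 := fun h => hiS (h ▸ hi0S)
      show a i + c i = 0
      rw [ha.2 i hi, hc, Pi.single_eq_of_ne hne, add_zero]
    · intro a _
      have h2 : ∀ u : ZMod 2, u + u = 0 := by decide
      show a + c + c = a
      rw [add_assoc]
      have h3 : c + c = 0 := by ext i; exact h2 (c i)
      rw [h3, add_zero]

lemma core' {n t : ℕ} (f : (Fin n → ZMod 2) → ZMod 2)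
    (hW : ∀ a : Fin n → ZMod 2, 1 ≤ hammingNorm a → hammingNorm a ≤ t →
        ∑ x : Fin n → ZMod 2, (-1 : ℤ) ^ (f x + ∑ i, a i * x i).val = 0)
    (S : Finset (Fin n)) (hS : S.card ≤ t) (v : ZMod 2) (y : Fin n → ZMod 2) :
    (2:ℤ)^(S.card+1)
        * ((univ.filter fun x : Fin n → ZMod 2 => f x = v ∧ ∀ i ∈ S, x i = y i).card : ℤ)
      = 2^n + (-1)^v.val * ∑ x : Fin n → ZMod 2, (-1:ℤ)^((f x).val) := by
  classical
  set A := univ.filter (fun a : Fin n → ZMod 2 => ∀ i ∈ Sᶜ, a i = 0) with hA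
  have huw : ∀ u w : ZMod 2, (u + w = 0) ↔ (u = w) := by decide
  have two_ite : ∀ u w : ZMod 2,
      2 * (if u = w then (1:ℤ) else 0) = 1 + (-1)^w.val * (-1)^u.val := by decide
  have h1 : ((univ.filter fun x : Fin n → ZMod 2 => f x = v ∧ ∀ i ∈ S, x i = y i).card : ℤ)
      = ∑ x : Fin n → ZMod 2,
          (if f x = v then (1:ℤ) else 0) * (if (∀ i ∈ S, x i = y i) then 1 else 0) := by
    rw [← Finset.sum_boole]
    apply Finset.sum_congr rfl
    intro x _
    by_cases h1 : f x = v <;> by_cases h2 : ∀ i ∈ S, x i = y i <;> simp [h1, h2]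
  have hsub : ∀ x : Fin n → ZMod 2,
      (if (∀ i ∈ S, x i = y i) then (2:ℤ)^S.card else 0)
        = ∑ a ∈ A, (-1:ℤ)^((∑ i, a i * x i).val) * (-1:ℤ)^((∑ i, a i * y i).val) := by
    intro x
    have hz := subcube_eval' S (fun i => x i + y i)
    simp only [huw] at hz
    rw [← hz]
    apply Finset.sum_congr rfl
    intro a _
    have hd : (∑ i, a i * (x i + y i)) = (∑ i, a i * x i) + (∑ i, a i * y i) := by
      rw [← Finset.sum_add_distrib]
      apply Finset.sum_congr rfl
      intro i _; ring
    rw [hd, sign_add']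
  have step1 : (2:ℤ)^(S.card+1)
        * ((univ.filter fun x : Fin n → ZMod 2 => f x = v ∧ ∀ i ∈ S, x i = y i).card : ℤ)
      = ∑ x : Fin n → ZMod 2, (1 + (-1:ℤ)^v.val * (-1)^((f x).val))
          * ∑ a ∈ A, (-1:ℤ)^((∑ i, a i * x i).val) * (-1:ℤ)^((∑ i, a i * y i).val) := by
    rw [h1, Finset.mul_sum]
    apply Finset.sum_congr rfl
    intro x _
    rw [← hsub x, ← two_ite (f x) v]
    by_cases h1 : f x = v <;> by_cases h2 : ∀ i ∈ S, x i = y i <;>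
      simp [h1, h2, pow_succ] <;> ring
  rw [step1]
  simp_rw [Finset.mul_sum]
  rw [Finset.sum_comm]
  have inner : ∀ a : Fin n → ZMod 2,
      (∑ x : Fin n → ZMod 2, (1 + (-1:ℤ)^v.val * (-1)^((f x).val))
          * ((-1:ℤ)^((∑ i, a i * x i).val) * (-1:ℤ)^((∑ i, a i * y i).val)))
      = (-1:ℤ)^((∑ i, a i * y i).val)
          * ((∑ x : Fin n → ZMod 2, (-1:ℤ)^((∑ i, a i * x i).val))
            + (-1)^v.val * ∑ x : Fin n → ZMod 2, (-1:ℤ)^((f x + ∑ i, a i * x i).val)) := by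
    intro a
    simp_rw [sign_add', mul_add, Finset.mul_sum, ← Finset.sum_add_distrib]
    apply Finset.sum_congr rfl
    intro x _; ring
  simp_rw [inner]
  have h0A : (0 : Fin n → ZMod 2) ∈ A := by simp [hA]
  rw [Finset.sum_eq_single_of_mem 0 h0A]
  · have e0 : (∑ i, (0 : Fin n → ZMod 2) i * y i) = 0 := by simp
    have e1 : ∀ x : Fin n → ZMod 2, (∑ i, (0 : Fin n → ZMod 2) i * x i) = 0 := by simp
    simp_rw [e0, e1]
    have ecard : (∑ _x : Fin n → ZMod 2, (1:ℤ)) = 2^n := by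
      rw [Finset.sum_const, Finset.card_univ]
      simp [Fintype.card_fun]
    simp only [ZMod.val_zero, pow_zero, one_mul, add_zero]
    rw [ecard, Finset.mul_sum]
  · intro a haA hane
    have hcube : (∑ x : Fin n → ZMod 2, (-1:ℤ)^((∑ i, a i * x i).val)) = 0 := cube_sum' hane
    have hWa : (∑ x : Fin n → ZMod 2, (-1:ℤ)^((f x + ∑ i, a i * x i).val)) = 0 := by
      apply hW
      · exact Nat.one_le_iff_ne_zero.mpr (hammingNorm_ne_zero_iff.mpr hane)
      · refine le_trans ?_ hS
        have hsupp : (univ.filter fun i => a i ≠ 0) ⊆ S := by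
          intro i hi
          rw [Finset.mem_filter] at hi
          by_contra hiS
          rw [hA, Finset.mem_filter] at haA
          exact hi.2 (haA.2 i (Finset.mem_compl.mpr hiS))
        exact Finset.card_le_card hsupp
    rw [hcube, hWa]
    ring

/-- **Xiao–Massey**: a Boolean function `f : F_2^n → F_2` is correlation immune of order `t`
(its output is statistically independent of any set of at most `t` input variables under the
uniform distribution) iff its Walsh transform vanishes on all `a` with `1 ≤ w_H(a) ≤ t`. -/
theorem correlation_immune_iff_walsh_vanishes {n t : ℕ}
    (f : (Fin n → ZMod 2) → ZMod 2) :
    (∀ S : Finset (Fin n), S.card ≤ t → ∀ (v : ZMod 2) (y : Fin n → ZMod 2),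
      2 ^ n * (univ.filter fun x : Fin n → ZMod 2 => f x = v ∧ ∀ i ∈ S, x i = y i).card
        = (univ.filter fun x : Fin n → ZMod 2 => f x = v).card
          * (univ.filter fun x : Fin n → ZMod 2 => ∀ i ∈ S, x i = y i).card)
    ↔ (∀ a : Fin n → ZMod 2, 1 ≤ hammingNorm a → hammingNorm a ≤ t →
        ∑ x : Fin n → ZMod 2, (-1 : ℤ) ^ (f x + ∑ i, a i * x i).val = 0) := by
  classical
  constructor
  · -- CI → Walsh vanishes
    intro hCI a ha1 ha2
    set S := univ.filter (fun i => a i ≠ 0) with hSdef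
    have hScard : S.card = hammingNorm a := rfl
    have hane : a ≠ 0 := hammingNorm_pos_iff.mp (lt_of_lt_of_le zero_lt_one ha1)
    have hCS := fun (v : ZMod 2) (y : Fin n → ZMod 2) => hCI S (hScard ▸ ha2) v y
    set Q : ℤ := ∑ y : Fin n → ZMod 2,
        ∑ x ∈ univ.filter (fun x : Fin n → ZMod 2 => ∀ i ∈ S, x i = y i),
          (-1:ℤ)^((∑ i, a i * y i).val) * (-1:ℤ)^((f x).val) with hQdef
    have sign_split : ∀ u : ZMod 2,
        (-1:ℤ)^u.val = (if u = 0 then (1:ℤ) else 0) - (if u = 1 then 1 else 0) := by decide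
    -- inner sum over x in terms of the two counts
    have hinner : ∀ y : Fin n → ZMod 2,
        (∑ x ∈ univ.filter (fun x : Fin n → ZMod 2 => ∀ i ∈ S, x i = y i),
            (-1:ℤ)^((f x).val))
        = ((univ.filter fun x : Fin n → ZMod 2 => f x = 0 ∧ ∀ i ∈ S, x i = y i).card : ℤ)
          - ((univ.filter fun x : Fin n → ZMod 2 => f x = 1 ∧ ∀ i ∈ S, x i = y i).card : ℤ) := by
      intro y
      simp_rw [sign_split]
      rw [Finset.sum_sub_distrib]
      congr 1
      · rw [Finset.sum_boole]
        norm_num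
        congr 1
        rw [Finset.filter_filter]
        apply Finset.filter_congr
        intro x _
        constructor
        · rintro ⟨h1, h2⟩; exact ⟨h2, h1⟩
        · rintro ⟨h1, h2⟩; exact ⟨h2, h1⟩
      · rw [Finset.sum_boole]
        norm_num
        congr 1
        rw [Finset.filter_filter]
        apply Finset.filter_congr
        intro x _
        constructor
        · rintro ⟨h1, h2⟩; exact ⟨h2, h1⟩
        · rintro ⟨h1, h2⟩; exact ⟨h2, h1⟩
    -- Evaluation 1: 2^n * Q = 0 via CI
    have hQ0 : Q = 0 := by
      have h2n : (2:ℤ)^n * Q = 0 := by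
        rw [hQdef, Finset.mul_sum]
        have hper : ∀ y : Fin n → ZMod 2,
            (2:ℤ)^n * ∑ x ∈ univ.filter (fun x : Fin n → ZMod 2 => ∀ i ∈ S, x i = y i),
              (-1:ℤ)^((∑ i, a i * y i).val) * (-1:ℤ)^((f x).val)
            = (-1:ℤ)^((∑ i, a i * y i).val)
              * ((((univ.filter fun x : Fin n → ZMod 2 => f x = 0).card : ℤ)
                  - ((univ.filter fun x : Fin n → ZMod 2 => f x = 1).card : ℤ))
                * 2^(n - S.card)) := by
          intro y
          rw [← Finset.mul_sum, hinner y]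
          have h0 := hCS 0 y
          have h1 := hCS 1 y
          rw [card_agree' S y] at h0 h1
          have h0' : (2:ℤ)^n * ((univ.filter fun x : Fin n → ZMod 2 => f x = 0 ∧ ∀ i ∈ S, x i = y i).card : ℤ)
              = ((univ.filter fun x : Fin n → ZMod 2 => f x = 0).card : ℤ) * 2^(n - S.card) := by
            exact_mod_cast h0
          have h1' : (2:ℤ)^n * ((univ.filter fun x : Fin n → ZMod 2 => f x = 1 ∧ ∀ i ∈ S, x i = y i).card : ℤ)
              = ((univ.filter fun x : Fin n → ZMod 2 => f x = 1).card : ℤ) * 2^(n - S.card) := by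
            exact_mod_cast h1
          linear_combination ((-1:ℤ)^((∑ i, a i * y i).val)) * h0'
            - ((-1:ℤ)^((∑ i, a i * y i).val)) * h1'
        simp_rw [hper]
        rw [← Finset.sum_mul, cube_sum' hane, zero_mul]
      have hne : ((2:ℤ)^n) ≠ 0 := pow_ne_zero _ two_ne_zero
      exact (mul_eq_zero.mp h2n).resolve_left hne
    -- Evaluation 2: Q = 2^(n - S.card) * W a
    have hswap : Q = ∑ x : Fin n → ZMod 2,
        ∑ y ∈ univ.filter (fun y : Fin n → ZMod 2 => ∀ i ∈ S, x i = y i),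
          (-1:ℤ)^((∑ i, a i * y i).val) * (-1:ℤ)^((f x).val) := by
      rw [hQdef]
      simp_rw [Finset.sum_filter]
      exact Finset.sum_comm
    have hinner2 : ∀ x : Fin n → ZMod 2,
        (∑ y ∈ univ.filter (fun y : Fin n → ZMod 2 => ∀ i ∈ S, x i = y i),
          (-1:ℤ)^((∑ i, a i * y i).val) * (-1:ℤ)^((f x).val))
        = (2:ℤ)^(n - S.card) * (-1:ℤ)^((f x + ∑ i, a i * x i).val) := by
      intro x
      have hdots : ∀ y ∈ univ.filter (fun y : Fin n → ZMod 2 => ∀ i ∈ S, x i = y i),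
          (-1:ℤ)^((∑ i, a i * y i).val) * (-1:ℤ)^((f x).val)
          = (-1:ℤ)^((∑ i, a i * x i).val) * (-1:ℤ)^((f x).val) := by
        intro y hy
        rw [Finset.mem_filter] at hy
        have hd : (∑ i, a i * y i) = ∑ i, a i * x i := by
          apply Finset.sum_congr rfl
          intro i _
          by_cases hi : i ∈ S
          · rw [← hy.2 i hi]
          · have : a i = 0 := by
              by_contra hai
              exact hi (by rw [hSdef]; exact Finset.mem_filter.mpr ⟨Finset.mem_univ _, hai⟩)
            rw [this, zero_mul, zero_mul]
        rw [hd]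
      rw [Finset.sum_congr rfl hdots, Finset.sum_const]
      have hfc : univ.filter (fun y : Fin n → ZMod 2 => ∀ i ∈ S, x i = y i)
          = univ.filter (fun y : Fin n → ZMod 2 => ∀ i ∈ S, y i = x i) := by
        apply Finset.filter_congr
        intro y _
        constructor
        · intro h i hi; exact (h i hi).symm
        · intro h i hi; exact (h i hi).symm
      rw [hfc, card_agree' S x, nsmul_eq_mul, sign_add']
      push_cast
      ring
    rw [hswap] at hQ0
    rw [Finset.sum_congr rfl (fun x _ => hinner2 x), ← Finset.mul_sum] at hQ0
    have hne : ((2:ℤ)^(n - S.card)) ≠ 0 := pow_ne_zero _ two_ne_zero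
    exact (mul_eq_zero.mp hQ0).resolve_left hne
  · -- Walsh vanishes → CI
    intro hW S hS v y
    have hA := core' f hW S hS v y
    have hB := core' f hW ∅ (Nat.zero_le t) v y
    have hfe : (univ.filter fun x : Fin n → ZMod 2 =>
        f x = v ∧ ∀ i ∈ (∅ : Finset (Fin n)), x i = y i)
        = univ.filter fun x : Fin n → ZMod 2 => f x = v := by
      apply Finset.filter_congr
      intro x _
      simp
    rw [hfe] at hB
    simp only [Finset.card_empty] at hB
    have hM := card_agree' S y
    have hSn : S.card ≤ n := by simpa using S.card_le_univ
    have hPQ : (2:ℤ)^S.card * 2^(n - S.card) = 2^n := by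
      rw [← pow_add, Nat.add_sub_cancel' hSn]
    have final : (2:ℤ)^n
          * ((univ.filter fun x : Fin n → ZMod 2 => f x = v ∧ ∀ i ∈ S, x i = y i).card : ℤ)
        = ((univ.filter fun x : Fin n → ZMod 2 => f x = v).card : ℤ) * 2^(n - S.card) := by
      apply mul_left_cancel₀ (a := (2:ℤ)^(S.card+1)) (pow_ne_zero _ two_ne_zero)
      rw [← hPQ]
      linear_combination ((2:ℤ)^S.card * 2^(n - S.card)) * hA
        - ((2:ℤ)^S.card * 2^(n - S.card)) * hB
    rw [hM]
    exact_mod_cast final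
end

section
/- Let f : F_2^d → F_2 be bipermutive, b = d−1, and let F : F_2^{2b} → F_2^b be the associated no-boundary CA. Define the 2^b × 2^b matrix L_F over F_2^b by L_F(x, y) = F(x ⧺ y) for x, y ∈ F_2^b (x indexing rows, y indexing columns). Then L_F is a Latin square of order 2^b, i.e., for every fixed x the map y ↦ L_F(x,y) is a bijection on F_2^b, and for every fixed y the map x ↦ L_F(x,y) is a bijection on F_2^b. -/
open Finset

/-- A local rule `f : F_2^d → F_2` is bipermutive if
`f(x₁,…,x_d) = x₁ ⊕ φ(x₂,…,x_{d-1}) ⊕ x_d` for some `φ`. -/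
def Bipermutive {d : ℕ} (hd : 2 ≤ d) (f : (Fin d → ZMod 2) → ZMod 2) : Prop :=
  ∃ φ : (Fin (d - 2) → ZMod 2) → ZMod 2, ∀ x : Fin d → ZMod 2,
    f x = x ⟨0, by omega⟩
        + φ (fun i => x ⟨i.val + 1, by have := i.isLt; omega⟩)
        + x ⟨d - 1, by omega⟩

/-- The no-boundary CA `F : F_2^{2b} → F_2^b` with local rule `f` of diameter `d = b + 1`:
it applies `f` to each of the `b` windows of `d` consecutive input bits. -/
def CA2 {b : ℕ} (f : (Fin (b + 1) → ZMod 2) → ZMod 2)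
    (z : Fin (2 * b) → ZMod 2) (i : Fin b) : ZMod 2 :=
  f fun j => z ⟨i.val + j.val, by have hi := i.isLt; have hj := j.isLt; omega⟩

/-- Concatenation of two `b`-bit vectors into a `2b`-bit vector. -/
def concat {b : ℕ} (x y : Fin b → ZMod 2) (i : Fin (2 * b)) : ZMod 2 :=
  if h : i.val < b then x ⟨i.val, h⟩ else y ⟨i.val - b, by have := i.isLt; omega⟩

lemma CA2_concat {b : ℕ} (f : (Fin (b + 1) → ZMod 2) → ZMod 2)
    (φ : (Fin (b + 1 - 2) → ZMod 2) → ZMod 2)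
    (hφ : ∀ x : Fin (b + 1) → ZMod 2, f x = x ⟨0, by omega⟩
        + φ (fun i => x ⟨i.val + 1, by have := i.isLt; omega⟩)
        + x ⟨b + 1 - 1, by omega⟩)
    (x y : Fin b → ZMod 2) (i : Fin b) :
    CA2 f (concat x y) i
      = x i + φ (fun k => concat x y
          ⟨i.val + k.val + 1, by have := i.isLt; have := k.isLt; omega⟩) + y i := by
  unfold CA2
  rw [hφ]
  have hi := i.isLt
  congr 1
  · congr 1
    show concat x y ⟨i.val + 0, by omega⟩ = x i
    simp [concat, hi]
  · show concat x y ⟨i.val + (b + 1 - 1), by omega⟩ = y i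
    have hb : b + 1 - 1 = b := rfl
    simp only [concat]
    rw [dif_neg (by omega)]
    congr 1
    ext
    show i.val + (b + 1 - 1) - b = i.val
    omega

/-- The matrix `L_F(x,y) = F(x ⧺ y)` of a bipermutive CA `F : F_2^{2b} → F_2^b` is a
Latin square of order `2^b`: each row map and each column map is a bijection of `F_2^b`. -/
theorem bipermutive_CA_latin_square {b : ℕ} (hb : 1 ≤ b)
    (f : (Fin (b + 1) → ZMod 2) → ZMod 2) (hf : Bipermutive (by omega) f) :
    (∀ x : Fin b → ZMod 2, Function.Bijective fun y : Fin b → ZMod 2 =>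
        CA2 f (concat x y)) ∧
    (∀ y : Fin b → ZMod 2, Function.Bijective fun x : Fin b → ZMod 2 =>
        CA2 f (concat x y)) := by
  obtain ⟨φ, hφ⟩ := hf
  constructor
  · intro x
    rw [← Finite.injective_iff_bijective]
    intro y y' h
    have h' : ∀ i : Fin b, CA2 f (concat x y) i = CA2 f (concat x y') i :=
      fun i => congrFun h i
    have H : ∀ n : ℕ, ∀ i : Fin b, i.val = n → y i = y' i := by
      intro n
      induction n using Nat.strong_induction_on with
      | _ n ih =>
        rintro i rfl
        have hi := h' i
        rw [CA2_concat f φ hφ, CA2_concat f φ hφ] at hi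
        have hmid : (fun k : Fin (b + 1 - 2) => concat x y
              ⟨i.val + k.val + 1, by have := i.isLt; have := k.isLt; omega⟩)
            = (fun k : Fin (b + 1 - 2) => concat x y'
              ⟨i.val + k.val + 1, by have := i.isLt; have := k.isLt; omega⟩) := by
          funext k
          have hk := k.isLt
          simp only [concat]
          split
          · rfl
          · next hge =>
            exact ih (i.val + k.val + 1 - b) (by omega)
              ⟨i.val + k.val + 1 - b, by have := i.isLt; omega⟩ rfl
        rw [hmid] at hi
        exact add_left_cancel hi
    funext i
    exact H i.val i rfl
  · intro y
    rw [← Finite.injective_iff_bijective]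
    intro x x' h
    have h' : ∀ i : Fin b, CA2 f (concat x y) i = CA2 f (concat x' y) i :=
      fun i => congrFun h i
    have H : ∀ n : ℕ, ∀ i : Fin b, b - i.val = n → x i = x' i := by
      intro n
      induction n using Nat.strong_induction_on with
      | _ n ih =>
        rintro i rfl
        have hi := h' i
        rw [CA2_concat f φ hφ, CA2_concat f φ hφ] at hi
        have hmid : (fun k : Fin (b + 1 - 2) => concat x y
              ⟨i.val + k.val + 1, by have := i.isLt; have := k.isLt; omega⟩)
            = (fun k : Fin (b + 1 - 2) => concat x' y
              ⟨i.val + k.val + 1, by have := i.isLt; have := k.isLt; omega⟩) := by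
          funext k
          have hk := k.isLt
          simp only [concat]
          split
          · next hlt =>
            exact ih (b - (i.val + k.val + 1)) (by omega)
              ⟨i.val + k.val + 1, hlt⟩ rfl
          · rfl
        rw [hmid] at hi
        have := add_right_cancel hi
        exact add_right_cancel this
    funext i
    exact H (b - i.val) i rfl
end

section
/- Let F : F_2^{2b} → F_2^b be a CA defined by a bipermutive rule of diameter d = b+1 with b ≥ 2, and suppose F is part of an orthogonal pair (there exists a bipermutive CA G : F_2^{2b} → F_2^b with z ↦ (F(z), G(z)) bijective). Then for any two distinct coordinates 1 ≤ i < j ≤ b and any pair (a, c) ∈ F_2^2, the number of inputs z ∈ F_2^{2b} with F(z)_i = a and F(z)_j = c is exactly 2^{2b−2}. -/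
open Finset

open Finset

def flp {n : ℕ} (p : Fin n) (z : Fin n → ZMod 2) : Fin n → ZMod 2 :=
  Function.update z p (z p + 1)

lemma flp_invol {n : ℕ} (p : Fin n) : Function.Involutive (flp p) := by
  intro z
  funext t
  by_cases h : t = p
  · subst h
    simp only [flp, Function.update_self]
    have h2 : (1 : ZMod 2) + 1 = 0 := by decide
    rw [add_assoc, h2, add_zero]
  · simp [flp, Function.update_of_ne h]

lemma CA2_flp_ne {b : ℕ} (f : (Fin (b + 1) → ZMod 2) → ZMod 2)
    (z : Fin (2 * b) → ZMod 2) (p : Fin (2 * b)) (i : Fin b)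
    (h : ∀ t : Fin (b + 1), i.val + t.val ≠ p.val) :
    CA2 f (flp p z) i = CA2 f z i := by
  unfold CA2
  congr 1
  funext t
  exact Function.update_of_ne (fun he => h t (congrArg Fin.val he)) _ _
open Finset

lemma flp_apply_ne {n : ℕ} (p : Fin n) (z : Fin n → ZMod 2) (w : Fin n)
    (hw : w.val ≠ p.val) : flp p z w = z w :=
  Function.update_of_ne (fun he => hw (congrArg Fin.val he)) _ _

lemma flp_apply_eq {n : ℕ} (p : Fin n) (z : Fin n → ZMod 2) (w : Fin n)
    (hw : w.val = p.val) : flp p z w = z w + 1 := by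
  have : w = p := Fin.ext hw
  subst this
  simp [flp, Function.update_self]

lemma CA2_flp_first {b : ℕ} (hb : 1 ≤ b)
    (f : (Fin (b + 1) → ZMod 2) → ZMod 2) (hf : Bipermutive (by omega) f)
    (z : Fin (2 * b) → ZMod 2) (i : Fin b) (hi : i.val < 2 * b) :
    CA2 f (flp ⟨i.val, hi⟩ z) i = CA2 f z i + 1 := by
  obtain ⟨φ, hφ⟩ := hf
  unfold CA2
  rw [hφ, hφ]
  rw [flp_apply_eq _ _ _ (by simp)]
  rw [flp_apply_ne _ _ _ (by simp; omega)]
  have hm : (fun t : Fin (b + 1 - 2) =>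
      flp ⟨i.val, hi⟩ z ⟨i.val + ((⟨t.val + 1, by have := t.isLt; omega⟩ : Fin (b+1))).val,
        by have := i.isLt; have := t.isLt; omega⟩) =
      (fun t : Fin (b + 1 - 2) =>
      z ⟨i.val + ((⟨t.val + 1, by have := t.isLt; omega⟩ : Fin (b+1))).val,
        by have := i.isLt; have := t.isLt; omega⟩) := by
    funext t
    exact flp_apply_ne _ _ _ (by simp)
  rw [hm]
  ring
lemma CA2_flp_last {b : ℕ} (hb : 1 ≤ b)
    (f : (Fin (b + 1) → ZMod 2) → ZMod 2) (hf : Bipermutive (by omega) f)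
    (z : Fin (2 * b) → ZMod 2) (i : Fin b) (hi : i.val + b < 2 * b) :
    CA2 f (flp ⟨i.val + b, hi⟩ z) i = CA2 f z i + 1 := by
  obtain ⟨φ, hφ⟩ := hf
  unfold CA2
  rw [hφ, hφ]
  rw [flp_apply_ne _ _ _ (by simp; omega)]
  have hm : (fun t : Fin (b + 1 - 2) =>
      flp ⟨i.val + b, hi⟩ z ⟨i.val + ((⟨t.val + 1, by have := t.isLt; omega⟩ : Fin (b+1))).val,
        by have := i.isLt; have := t.isLt; omega⟩) =
      (fun t : Fin (b + 1 - 2) =>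
      z ⟨i.val + ((⟨t.val + 1, by have := t.isLt; omega⟩ : Fin (b+1))).val,
        by have := i.isLt; have := t.isLt; omega⟩) := by
    funext t
    exact flp_apply_ne _ _ _ (by have := t.isLt; simp; omega)
  rw [hm]
  rw [flp_apply_eq _ _ _ (by simp)]
  ring
lemma card_flip_eq {α : Type*} [Fintype α] [DecidableEq α] (P Q : α → Prop)
    [DecidablePred P] [DecidablePred Q] (e : α → α) (hinv : Function.Involutive e)
    (h : ∀ z, P z → Q (e z)) (h' : ∀ z, Q z → P (e z)) :
    (univ.filter P).card = (univ.filter Q).card := by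
  apply Finset.card_bij' (fun z _ => e z) (fun z _ => e z)
  · intro z hz
    simp only [mem_filter, mem_univ, true_and] at hz ⊢
    exact h z hz
  · intro z hz
    simp only [mem_filter, mem_univ, true_and] at hz ⊢
    exact h' z hz
  · intro z _; exact hinv z
  · intro z _; exact hinv z

/-- If a bipermutive CA `F : F_2^{2b} → F_2^b` is part of an orthogonal pair, then for any
two distinct output coordinates `i < j` and any pair of bits `(a, c)`, exactly `2^{2b-2}`
inputs `z` satisfy `F(z)_i = a` and `F(z)_j = c`. -/
theorem single_CA_two_columns_balanced {b : ℕ} (hb : 2 ≤ b)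
    (f : (Fin (b + 1) → ZMod 2) → ZMod 2) (hf : Bipermutive (by omega) f)
    (hpair : ∃ g : (Fin (b + 1) → ZMod 2) → ZMod 2, Bipermutive (by omega) g ∧
      Function.Bijective fun z : Fin (2 * b) → ZMod 2 => (CA2 f z, CA2 g z))
    (i j : Fin b) (hij : i < j) (a c : ZMod 2) :
    (univ.filter fun z : Fin (2 * b) → ZMod 2 =>
      CA2 f z i = a ∧ CA2 f z j = c).card = 2 ^ (2 * b - 2) := by
  clear hpair
  have hlt : (i : ℕ) < (j : ℕ) := hij
  have hjb := j.isLt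
  have hi2 : i.val < 2 * b := by have := i.isLt; omega
  have hj2 : j.val + b < 2 * b := by omega
  have add11 : ∀ x : ZMod 2, x + 1 + 1 = x := by decide
  -- effects of the two flips
  have hFi_p : ∀ z, CA2 f (flp ⟨i.val, hi2⟩ z) i = CA2 f z i + 1 :=
    fun z => CA2_flp_first (by omega) f hf z i hi2
  have hFj_p : ∀ z, CA2 f (flp ⟨i.val, hi2⟩ z) j = CA2 f z j :=
    fun z => CA2_flp_ne f z _ j (fun t => by show j.val + t.val ≠ i.val; omega)
  have hFi_q : ∀ z, CA2 f (flp ⟨j.val + b, hj2⟩ z) i = CA2 f z i :=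
    fun z => CA2_flp_ne f z _ i
      (fun t => by have := t.isLt; show i.val + t.val ≠ j.val + b; omega)
  have hFj_q : ∀ z, CA2 f (flp ⟨j.val + b, hj2⟩ z) j = CA2 f z j + 1 :=
    fun z => CA2_flp_last (by omega) f hf z j hj2
  -- all four fibers have the same cardinality
  have step1 : ∀ a' c' : ZMod 2,
      (univ.filter fun z : Fin (2 * b) → ZMod 2 =>
        CA2 f z i = a' ∧ CA2 f z j = c').card
      = (univ.filter fun z : Fin (2 * b) → ZMod 2 =>
        CA2 f z i = a' + 1 ∧ CA2 f z j = c').card := by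
    intro a' c'
    apply card_flip_eq _ _ _ (flp_invol ⟨i.val, hi2⟩)
    · rintro z ⟨h1, h2⟩
      exact ⟨by rw [hFi_p, h1], by rw [hFj_p]; exact h2⟩
    · rintro z ⟨h1, h2⟩
      exact ⟨by rw [hFi_p, h1, add11], by rw [hFj_p]; exact h2⟩
  have step2 : ∀ a' c' : ZMod 2,
      (univ.filter fun z : Fin (2 * b) → ZMod 2 =>
        CA2 f z i = a' ∧ CA2 f z j = c').card
      = (univ.filter fun z : Fin (2 * b) → ZMod 2 =>
        CA2 f z i = a' ∧ CA2 f z j = c' + 1).card := by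
    intro a' c'
    apply card_flip_eq _ _ _ (flp_invol ⟨j.val + b, hj2⟩)
    · rintro z ⟨h1, h2⟩
      exact ⟨by rw [hFi_q]; exact h1, by rw [hFj_q, h2]⟩
    · rintro z ⟨h1, h2⟩
      exact ⟨by rw [hFi_q]; exact h1, by rw [hFj_q, h2, add11]⟩
  have two : ∀ x y : ZMod 2, y = x ∨ y = x + 1 := by decide
  have key : ∀ a' c' : ZMod 2,
      (univ.filter fun z : Fin (2 * b) → ZMod 2 =>
        CA2 f z i = a' ∧ CA2 f z j = c').card
      = (univ.filter fun z : Fin (2 * b) → ZMod 2 =>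
        CA2 f z i = a ∧ CA2 f z j = c).card := by
    intro a' c'
    rcases two a a' with h1 | h1 <;> rcases two c c' with h2 | h2 <;> rw [h1, h2]
    · exact (step2 a c).symm
    · exact (step1 a c).symm
    · rw [← step1 a (c + 1), ← step2 a c]
  -- sum over the four fibers
  have hsum := Finset.card_eq_sum_card_fiberwise
    (s := (univ : Finset (Fin (2 * b) → ZMod 2)))
    (t := (univ : Finset (ZMod 2 × ZMod 2)))
    (f := fun z => (CA2 f z i, CA2 f z j)) (fun x _ => mem_univ _)
  have hfib : ∀ p : ZMod 2 × ZMod 2,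
      (univ.filter fun z : Fin (2 * b) → ZMod 2 =>
        (CA2 f z i, CA2 f z j) = p)
      = (univ.filter fun z : Fin (2 * b) → ZMod 2 =>
        CA2 f z i = p.1 ∧ CA2 f z j = p.2) := by
    intro p; ext z; simp [Prod.ext_iff]
  rw [Finset.sum_congr rfl (fun p _ => by rw [hfib p, key p.1 p.2])] at hsum
  rw [Finset.sum_const] at hsum
  have hcu : (univ : Finset (Fin (2 * b) → ZMod 2)).card = 2 ^ (2 * b) := by
    simp [Finset.card_univ]
  have hc4 : (univ : Finset (ZMod 2 × ZMod 2)).card = 4 := by decide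
  rw [hcu, hc4, smul_eq_mul] at hsum
  have hpow : (2 : ℕ) ^ (2 * b) = 2 ^ (2 * b - 2) * 4 := by
    have h1 : 2 * b = (2 * b - 2) + 2 := by omega
    calc (2 : ℕ) ^ (2 * b) = 2 ^ ((2 * b - 2) + 2) := by rw [← h1]
      _ = 2 ^ (2 * b - 2) * 2 ^ 2 := pow_add 2 _ _
      _ = 2 ^ (2 * b - 2) * 4 := by norm_num
  omega
end

section
/- Let F, G : F_2^{2b} → F_2^b be orthogonal CA defined by bipermutive rules (z ↦ (F(z), G(z)) is a bijection). Then for any coordinates 1 ≤ i ≤ b and 1 ≤ j ≤ b and any pair (a, c) ∈ F_2^2, the number of z ∈ F_2^{2b} with F(z)_i = a and G(z)_j = c is exactly 2^{2b−2}. -/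
open Finset

lemma Fintype.card_filter_apply_eq {ι R : Type*} [Fintype ι] [DecidableEq ι] [Fintype R]
    [DecidableEq R] (i : ι) (a : R) :
    #{u : ι → R | u i = a} = Fintype.card R ^ (Fintype.card ι - 1) := by
  simpa using Fintype.card_filter_piFinset_const_eq_of_mem (univ : Finset R) i (mem_univ a)

lemma Finset.card_filter_comp_of_bijective {α β : Type*} [Fintype α] [Fintype β] {e : α → β}
    (he : Function.Bijective e) (p : β → Prop) [DecidablePred p] :
    #{x | p (e x)} = #{y | p y} := by
  rw [← Fintype.card_subtype, ← Fintype.card_subtype]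
  exact Fintype.card_congr ((Equiv.ofBijective e he).subtypeEquiv fun _ => Iff.rfl)

/-- For orthogonal bipermutive CA `F, G : F_2^{2b} → F_2^b`, any coordinates `i, j` and any
pair of bits `(a, c)`, exactly `2^{2b-2}` inputs `z` satisfy `F(z)_i = a` and `G(z)_j = c`. -/
theorem two_CA_columns_balanced {b : ℕ}
    (f g : (Fin (b + 1) → ZMod 2) → ZMod 2)
    (horth : Function.Bijective fun z : Fin (2 * b) → ZMod 2 => (CA2 f z, CA2 g z))
    (i j : Fin b) (a c : ZMod 2) :
    (univ.filter fun z : Fin (2 * b) → ZMod 2 =>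
      CA2 f z i = a ∧ CA2 g z j = c).card = 2 ^ (2 * b - 2) := by
  have hb : 0 < b := i.pos
  calc #{z | CA2 f z i = a ∧ CA2 g z j = c}
      = #{p : (Fin b → ZMod 2) × (Fin b → ZMod 2) | p.1 i = a ∧ p.2 j = c} :=
        card_filter_comp_of_bijective horth fun p => p.1 i = a ∧ p.2 j = c
    _ = #{u : Fin b → ZMod 2 | u i = a} * #{v : Fin b → ZMod 2 | v j = c} := by
        rw [← card_product, ← filter_product, univ_product_univ]
    _ = 2 ^ (b - 1) * 2 ^ (b - 1) := by
        simp only [Fintype.card_filter_apply_eq, ZMod.card, Fintype.card_fin]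
    _ = 2 ^ (2 * b - 2) := by rw [← pow_add]; congr 1; omega
end

section
/- Let F_1, ..., F_k : F_2^{2b} → F_2^b be mutually orthogonal bipermutive CA of diameter d = b+1 with k ≥ 3, and let n = kb. Define f : F_2^n → F_2 by f(x) = 1 if and only if x = (F_1(z), ..., F_k(z)) for some z ∈ F_2^{2b}. Then f is correlation immune of order at least 2 and has Hamming weight exactly 2^{2b}. -/
open Finset

/-- The row of the `2^{2b} × kb` array of a family of CA indexed by `z`: the concatenation
`(F₁(z), …, F_k(z))`, where column `i` corresponds to output coordinate `i % b` of CA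
number `i / b`. -/
def mocaRow {b k : ℕ} (hb : 1 ≤ b) (fs : Fin k → (Fin (b + 1) → ZMod 2) → ZMod 2)
    (z : Fin (2 * b) → ZMod 2) (i : Fin (k * b)) : ZMod 2 :=
  CA2 (fs ⟨i.val / b, (Nat.div_lt_iff_lt_mul (by omega)).mpr i.isLt⟩) z
    ⟨i.val % b, Nat.mod_lt _ (by omega)⟩

lemma chi_add : ∀ u v : ZMod 2, (-1:ℤ)^((u+v).val) = (-1:ℤ)^u.val * (-1:ℤ)^v.val := by decide

lemma chi_one_add : ∀ c : ZMod 2, (-1:ℤ)^((1+c).val) = -(-1:ℤ)^c.val := by decide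

lemma sum_char' {n : ℕ} (s : Finset (Fin n)) (hs : s.Nonempty) :
    ∑ x : Fin n → ZMod 2, (-1:ℤ)^((∑ i ∈ s, x i).val) = 0 := by
  obtain ⟨i0, hi0⟩ := hs
  set δ : Fin n → ZMod 2 := fun i => if i = i0 then 1 else 0 with hδ
  have h1 : ∀ x : Fin n → ZMod 2, (∑ i ∈ s, (x + δ) i) = 1 + ∑ i ∈ s, x i := by
    intro x
    simp only [Pi.add_apply]
    rw [Finset.sum_add_distrib]
    have h2 : ∑ i ∈ s, δ i = 1 := by
      simp only [hδ, Finset.sum_ite_eq' s i0 (fun _ => (1:ZMod 2))]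
      simp [hi0]
    rw [h2, add_comm]
  have h2 := Fintype.sum_equiv (Equiv.addRight δ)
      (fun x : Fin n → ZMod 2 => (-1:ℤ)^((∑ i ∈ s, (x + δ) i).val))
      (fun y : Fin n → ZMod 2 => (-1:ℤ)^((∑ i ∈ s, y i).val)) (fun x => rfl)
  simp only [h1, chi_one_add] at h2
  rw [Finset.sum_neg_distrib] at h2
  linarith

lemma balanced {b : ℕ} {Z : Type} [Fintype Z]
    (e : Z → ((Fin b → ZMod 2) × (Fin b → ZMod 2))) (he : Function.Bijective e)
    (s t : Finset (Fin b)) (hst : s.Nonempty ∨ t.Nonempty) :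
    ∑ z : Z, (-1:ℤ)^(((∑ j ∈ s, (e z).1 j) + ∑ j ∈ t, (e z).2 j).val) = 0 := by
  have h := Fintype.sum_bijective e he
      (fun z => (-1:ℤ)^(((∑ j ∈ s, (e z).1 j) + ∑ j ∈ t, (e z).2 j).val))
      (fun p : (Fin b → ZMod 2) × (Fin b → ZMod 2) =>
        (-1:ℤ)^(((∑ j ∈ s, p.1 j) + ∑ j ∈ t, p.2 j).val)) (fun z => rfl)
  rw [h, Fintype.sum_prod_type]
  simp only [chi_add]
  rw [← Finset.sum_mul_sum]
  rcases hst with hn | hn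
  · rw [sum_char' s hn, zero_mul]
  · rw [sum_char' t hn, mul_zero]

lemma mocaRow_coord {b k : ℕ} (hb : 1 ≤ b) (fs : Fin k → (Fin (b + 1) → ZMod 2) → ZMod 2)
    (z : Fin (2 * b) → ZMod 2) (l : Fin k) (j : Fin b) (i : Fin (k * b))
    (hi : i.val = l.val * b + j.val) :
    mocaRow hb fs z i = CA2 (fs l) z j := by
  have hd : i.val / b = l.val := by
    rw [hi, add_comm, Nat.add_mul_div_right _ _ (show 0 < b by omega),
      Nat.div_eq_of_lt j.isLt, zero_add]
  have hm : i.val % b = j.val := by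
    rw [hi, add_comm, Nat.add_mul_mod_self_right, Nat.mod_eq_of_lt j.isLt]
  have key : ∀ (l' : Fin k) (j' : Fin b), l'.val = l.val → j'.val = j.val →
      CA2 (fs l') z j' = CA2 (fs l) z j := by
    intro l' j' h1 h2
    have e1 : l' = l := Fin.ext h1
    have e2 : j' = j := Fin.ext h2
    rw [e1, e2]
  exact key _ _ hd hm

lemma other {k : ℕ} (hk : 3 ≤ k) (l : Fin k) : ∃ m : Fin k, l ≠ m := by
  by_cases h : l.val = 0
  · exact ⟨⟨1, by omega⟩, fun he => by apply_fun Fin.val at he; simp at he; omega⟩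
  · exact ⟨⟨0, by omega⟩, fun he => by apply_fun Fin.val at he; simp at he; omega⟩

lemma moca_sum {b k : ℕ} (hb : 1 ≤ b) (hk : 3 ≤ k)
    (fs : Fin k → (Fin (b + 1) → ZMod 2) → ZMod 2)
    (horth : ∀ l m, l ≠ m → Function.Bijective fun z : Fin (2 * b) → ZMod 2 =>
      (CA2 (fs l) z, CA2 (fs m) z))
    (S : Finset (Fin (k * b))) (h1 : 1 ≤ S.card) (h2 : S.card ≤ 2) :
    ∑ z : Fin (2 * b) → ZMod 2, (-1:ℤ)^((∑ i ∈ S, mocaRow hb fs z i).val) = 0 := by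
  have hb' : 0 < b := by omega
  rcases (by omega : S.card = 1 ∨ S.card = 2) with hc | hc
  · obtain ⟨i0, hS⟩ := Finset.card_eq_one.mp hc
    set l0 : Fin k := ⟨i0.val / b, (Nat.div_lt_iff_lt_mul hb').mpr i0.isLt⟩ with hl0
    set j0 : Fin b := ⟨i0.val % b, Nat.mod_lt _ hb'⟩ with hj0
    obtain ⟨m, hm⟩ := other hk l0
    set E : (Fin (2 * b) → ZMod 2) → _ := fun z => (CA2 (fs l0) z, CA2 (fs m) z) with hE
    have hz : ∀ z, (∑ i ∈ S, mocaRow hb fs z i) =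
        (∑ j ∈ ({j0} : Finset (Fin b)), (E z).1 j) +
        ∑ j ∈ (∅ : Finset (Fin b)), (E z).2 j := by
      intro z
      rw [hS, Finset.sum_singleton, Finset.sum_singleton, Finset.sum_empty, add_zero]
      rfl
    simp only [hz]
    exact balanced E (horth _ _ hm) {j0} ∅ (Or.inl (Finset.singleton_nonempty _))
  · obtain ⟨i0, i1, hne, hS⟩ := Finset.card_eq_two.mp hc
    set l0 : Fin k := ⟨i0.val / b, (Nat.div_lt_iff_lt_mul hb').mpr i0.isLt⟩ with hl0
    set j0 : Fin b := ⟨i0.val % b, Nat.mod_lt _ hb'⟩ with hj0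
    set l1 : Fin k := ⟨i1.val / b, (Nat.div_lt_iff_lt_mul hb').mpr i1.isLt⟩ with hl1
    set j1 : Fin b := ⟨i1.val % b, Nat.mod_lt _ hb'⟩ with hj1
    by_cases hl : l0 = l1
    · have hdiv : i0.val / b = i1.val / b := congrArg Fin.val hl
      have hj : j0 ≠ j1 := by
        intro he
        have hmod : i0.val % b = i1.val % b := congrArg Fin.val he
        refine hne (Fin.ext ?_)
        calc i0.val = b * (i0.val / b) + i0.val % b := (Nat.div_add_mod _ _).symm
          _ = b * (i1.val / b) + i1.val % b := by rw [hdiv, hmod]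
          _ = i1.val := Nat.div_add_mod _ _
      obtain ⟨m, hm⟩ := other hk l0
      set E : (Fin (2 * b) → ZMod 2) → _ := fun z => (CA2 (fs l0) z, CA2 (fs m) z) with hE
      have hz : ∀ z, (∑ i ∈ S, mocaRow hb fs z i) =
          (∑ j ∈ ({j0, j1} : Finset (Fin b)), (E z).1 j) +
          ∑ j ∈ (∅ : Finset (Fin b)), (E z).2 j := by
        intro z
        rw [hS, Finset.sum_pair hne, Finset.sum_pair hj, Finset.sum_empty, add_zero]
        have r0 : mocaRow hb fs z i0 = (E z).1 j0 := rfl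
        have r1 : mocaRow hb fs z i1 = (E z).1 j1 := by
          have h' : mocaRow hb fs z i1 = CA2 (fs l1) z j1 := rfl
          rw [h', ← hl]
        rw [r0, r1]
      simp only [hz]
      exact balanced E (horth _ _ hm) {j0, j1} ∅ (Or.inl ⟨j0, by simp⟩)
    · set E : (Fin (2 * b) → ZMod 2) → _ := fun z => (CA2 (fs l0) z, CA2 (fs l1) z) with hE
      have hz : ∀ z, (∑ i ∈ S, mocaRow hb fs z i) =
          (∑ j ∈ ({j0} : Finset (Fin b)), (E z).1 j) +
          ∑ j ∈ ({j1} : Finset (Fin b)), (E z).2 j := by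
        intro z
        rw [hS, Finset.sum_pair hne, Finset.sum_singleton, Finset.sum_singleton]
        rfl
      simp only [hz]
      exact balanced E (horth _ _ hl) {j0} {j1} (Or.inl (Finset.singleton_nonempty _))

/-- The Boolean function of `n = kb` variables whose support consists of the rows
`(F₁(z), …, F_k(z))` of a family of `k ≥ 3` mutually orthogonal bipermutive CA is
correlation immune of order at least 2 (its Walsh transform vanishes on all `a` with
`1 ≤ w_H(a) ≤ 2`), and its Hamming weight is exactly `2^{2b}`. -/
theorem moca_correlation_immune_function {b k : ℕ} (hb : 1 ≤ b) (hk : 3 ≤ k)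
    (fs : Fin k → (Fin (b + 1) → ZMod 2) → ZMod 2)
    (hbip : ∀ l, Bipermutive (by omega) (fs l))
    (horth : ∀ l m, l ≠ m → Function.Bijective fun z : Fin (2 * b) → ZMod 2 =>
      (CA2 (fs l) z, CA2 (fs m) z))
    (f : (Fin (k * b) → ZMod 2) → ZMod 2)
    (hf : ∀ x, f x = if ∃ z, mocaRow hb fs z = x then 1 else 0) :
    (∀ a : Fin (k * b) → ZMod 2, 1 ≤ hammingNorm a → hammingNorm a ≤ 2 →
      ∑ x : Fin (k * b) → ZMod 2, (-1 : ℤ) ^ (f x + ∑ i, a i * x i).val = 0) ∧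
    (univ.filter fun x : Fin (k * b) → ZMod 2 => f x = 1).card = 2 ^ (2 * b) := by
  -- injectivity of the row map
  have hinj : Function.Injective (mocaRow hb fs) := by
    intro z z' hzz
    have h01 : (⟨0, by omega⟩ : Fin k) ≠ ⟨1, by omega⟩ := by
      intro he; apply_fun Fin.val at he; simp at he
    apply (horth _ _ h01).injective
    have key : ∀ (l : Fin k) (j : Fin b), CA2 (fs l) z j = CA2 (fs l) z' j := by
      intro l j
      have hi : l.val * b + j.val < k * b := by
        have h1 : l.val + 1 ≤ k := l.isLt
        calc l.val * b + j.val < l.val * b + b := by have := j.isLt; omega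
          _ = (l.val + 1) * b := by ring
          _ ≤ k * b := Nat.mul_le_mul_right _ h1
      have e0 := mocaRow_coord hb fs z l j ⟨_, hi⟩ rfl
      have e1 := mocaRow_coord hb fs z' l j ⟨_, hi⟩ rfl
      rw [← e0, ← e1, hzz]
    exact Prod.ext (funext fun j => key _ j) (funext fun j => key _ j)
  have hone : ∀ x, f x = 1 ↔ ∃ z, mocaRow hb fs z = x := by
    intro x
    rw [hf]
    constructor
    · intro h
      by_contra hP
      rw [if_neg hP] at h
      exact (by decide : ¬ ((0:ZMod 2) = 1)) h
    · intro h; rw [if_pos h]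
  have hfilter : (univ.filter fun x : Fin (k * b) → ZMod 2 => f x = 1)
      = Finset.image (mocaRow hb fs) univ := by
    ext x
    simp only [Finset.mem_filter, Finset.mem_image, Finset.mem_univ, true_and, hone]
  constructor
  · intro a h1 h2
    set Sa : Finset (Fin (k * b)) := univ.filter (fun i => a i ≠ 0) with hSa
    have hcard : Sa.card = hammingNorm a := rfl
    have hane : Sa.Nonempty := Finset.card_pos.mp (by rw [hcard]; exact h1)
    have hsum : ∀ x : Fin (k * b) → ZMod 2, ∑ i, a i * x i = ∑ i ∈ Sa, x i := by
      intro x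
      have e1 : ∑ i ∈ Sa, a i * x i = ∑ i, a i * x i :=
        Finset.sum_filter_of_ne (fun i _ h ha => h (by rw [ha, zero_mul]))
      rw [← e1]
      refine Finset.sum_congr rfl (fun i hi => ?_)
      have ha1 : a i = 1 := by
        have := (Finset.mem_filter.mp hi).2
        revert this
        generalize a i = c
        revert c; decide
      rw [ha1, one_mul]
    have hpt : ∀ x : Fin (k * b) → ZMod 2, (-1:ℤ)^((f x + ∑ i, a i * x i).val)
        = (-1:ℤ)^((∑ i, a i * x i).val)
          - 2 * (if f x = 1 then (-1:ℤ)^((∑ i, a i * x i).val) else 0) := by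
      intro x
      have hfx : f x = 0 ∨ f x = 1 := by
        rw [hf]; split
        · exact Or.inr rfl
        · exact Or.inl rfl
      rcases hfx with h | h
      · rw [h, zero_add, if_neg (by decide)]
        ring
      · rw [h, if_pos rfl, chi_one_add]
        ring
    simp only [hpt]
    rw [Finset.sum_sub_distrib, ← Finset.mul_sum]
    have hA : ∑ x : Fin (k * b) → ZMod 2, (-1:ℤ)^((∑ i, a i * x i).val) = 0 := by
      simp only [hsum]
      exact sum_char' Sa hane
    have hB : ∑ x : Fin (k * b) → ZMod 2,
        (if f x = 1 then (-1:ℤ)^((∑ i, a i * x i).val) else 0) = 0 := by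
      have h' : ∀ z ∈ univ, ∀ z' ∈ univ,
          mocaRow hb fs z = mocaRow hb fs z' → z = z' := fun z _ z' _ h => hinj h
      rw [← Finset.sum_filter, hfilter, Finset.sum_image h']
      simp only [hsum]
      exact moca_sum hb hk fs horth Sa (by rw [hcard]; exact h1) (by rw [hcard]; exact h2)
    rw [hA, hB, mul_zero, sub_zero]
  · rw [hfilter, Finset.card_image_of_injective _ hinj, Finset.card_univ]
    simp
end
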